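/- Let n ≥ 5. For each 1 ≤ k ≤ n−4, the function χ_k defined on the open set U = {x ∈ ℝ^{n−1} : ξ_1(x) > 0} by χ_k(x) = ξ_{k+1}(x) · ξ_1(x)^{−(k+2)/2} (using the real power function) satisfies both partial differential equations Σ_{j=1}^{n−1} (n−1−j) x_j · ∂χ_k/∂x_j = 0 and Σ_{j=1}^{n−1} x_j · ∂χ_k/∂x_j = 0 on U. (These are the n−4 functionally independent generalized Casimir invariants of the solvable Lie algebra s_{n+2}.) -/

import Mathlib

open MvPolynomial in
/-- The polynomial invariants `ξ_k` of the coadjoint representation of `n_{n,1}`: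
`ξ_0 = x 1` and, for `k ≥ 1`,
`ξ_k = ((-1)^k k/(k+1)!) x_2^{k+1} + Σ_{j=0}^{k-1} ((-1)^j/j!) x_2^j x_{k+2-j} x_1^{k-j}`
(so `ξ_1 = -x_2²/2 + x_1 x_3`). -/
noncomputable def xi (F : Type*) [Field F] : ℕ → MvPolynomial ℕ F
  | 0 => X 1
  | k + 1 =>
      C ((-1 : F) ^ (k + 1) * ((k + 1 : ℕ) : F) / (((k + 2).factorial : ℕ) : F)) *
          X 2 ^ (k + 2) +
        ∑ j ∈ Finset.range (k + 1),
          C ((-1 : F) ^ j / ((j.factorial : ℕ) : F)) * X 2 ^ j *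
            X (k + 3 - j) * X 1 ^ (k + 1 - j)

/-- The `1`-based coordinates of a point `x ∈ ℝ^{n-1}`: `coords n x i = x_i` for
`1 ≤ i ≤ n-1` and `0` otherwise. -/
noncomputable def coords (n : ℕ) (x : Fin (n - 1) → ℝ) : ℕ → ℝ :=
  fun i => if h : 1 ≤ i ∧ i ≤ n - 1 then x ⟨i - 1, by omega⟩ else 0

/-- The `j`-th coordinate unit vector of `ℝ^{n-1}` (`1`-based). -/
noncomputable def unitv (n : ℕ) (j : ℕ) : Fin (n - 1) → ℝ :=
  fun i => if i.val + 1 = j then 1 else 0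

/-- The generalized Casimir invariants of the solvable Lie algebra `s_{n+2}`:
`χ_k = ξ_{k+1} · ξ_1^{-(k+2)/2}` (real power), defined on `{x : ξ_1(x) > 0}`. -/
noncomputable def chiS (n : ℕ) (k : ℕ) (x : Fin (n - 1) → ℝ) : ℝ :=
  MvPolynomial.eval (coords n x) (xi ℝ (k + 1)) *
    (MvPolynomial.eval (coords n x) (xi ℝ 1)) ^ (-(((k + 2 : ℕ) : ℝ) / 2))

/-!
Both operators are Euler operators of weighted scalings: `Σ x_j ∂_j` generates
`x_j ↦ l x_j`, `Σ j x_j ∂_j` generates `x_j ↦ l^j x_j`, and `Σ (n-1-j) x_j ∂_j` is `n-1` times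
the first minus the second. For the scaling `x_j ↦ l^(a + b j)` every `ξ_{k+1}` is weighted
homogeneous of degree `(k+2)(a+2b)`, so the powers of `l` cancel in
`χ_k = ξ_{k+1} ξ_1^{-(k+2)/2}` when `l > 0`; differentiating `χ_k(l · x) = χ_k(x)` at `l = 1`
gives the equations.
-/

open MvPolynomial

theorem MvPolynomial.IsWeightedHomogeneous.eval_pow_mul {σ R : Type*} [CommSemiring R]
    {w : σ → ℕ} {m : ℕ} {φ : MvPolynomial σ R} (hφ : φ.IsWeightedHomogeneous w m)
    (l : R) (y : σ → R) :
    eval (fun i => l ^ w i * y i) φ = l ^ m * eval y φ := by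
  induction hφ using IsWeightedHomogeneous.induction_on with
  | zero => simp
  | add p q _ _ hp hq => simp only [map_add, hp, hq, mul_add]
  | monomial d r hd =>
    simp only [eval_monomial, ← hd, Finsupp.weight_apply, Finsupp.prod, Finsupp.sum, mul_pow,
      Finset.prod_mul_distrib, ← pow_mul, smul_eq_mul, ← Finset.prod_pow_eq_pow_sum, mul_comm (w _)]
    ring

theorem isWeightedHomogeneous_xi_succ (F : Type*) [Field F] (a b k : ℕ) :
    (xi F (k + 1)).IsWeightedHomogeneous (fun j => a + b * j) ((k + 2) * (a + 2 * b)) := by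
  have hX (i : ℕ) :
      (X i : MvPolynomial ℕ F).IsWeightedHomogeneous (fun j => a + b * j) (a + b * i) :=
    isWeightedHomogeneous_X F _ i
  rw [xi]
  refine .add ?_ (.sum _ _ _ fun j hj => ?_)
  · convert ((hX 2).pow (k + 2)).C_mul _ using 1
    rw [smul_eq_mul]; ring
  · obtain ⟨i, rfl⟩ : ∃ i, k = j + i :=
      Nat.exists_eq_add_of_le (Nat.lt_succ_iff.mp (Finset.mem_range.mp hj))
    convert (((hX 2).pow j).C_mul _).mul (hX _) |>.mul ((hX 1).pow _) using 1
    rw [smul_eq_mul, smul_eq_mul, show j + i + 3 - j = i + 3 by omega,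
      show j + i + 1 - j = i + 1 by omega]
    ring

theorem fderiv_apply_eq_zero_of_comp_eventuallyEq {E F : Type*} [NormedAddCommGroup E]
    [NormedSpace ℝ E] [NormedAddCommGroup F] [NormedSpace ℝ F] {f : E → F} {c : ℝ → E}
    {t : ℝ} {x v : E} (hcx : c t = x) (hf : DifferentiableAt ℝ f x) (hc : HasDerivAt c v t)
    (hfc : f ∘ c =ᶠ[nhds t] fun _ => f x) :
    fderiv ℝ f x v = 0 := by
  subst hcx
  exact (hf.hasFDerivAt.comp_hasDerivAt t hc).unique <|
    (hasDerivAt_const t (f (c t))).congr_of_eventuallyEq hfc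

section coords

variable {n : ℕ}

theorem coords_succ (x : Fin (n - 1) → ℝ) (i : Fin (n - 1)) : coords n x (i + 1 : ℕ) = x i := by
  rw [coords, dif_pos ⟨by omega, by omega⟩]
  rfl

theorem coords_weight_smul (w : ℕ → ℕ) (l : ℝ) (x : Fin (n - 1) → ℝ) :
    coords n (fun i => l ^ w (i + 1 : ℕ) * x i) = fun j => l ^ w j * coords n x j := by
  funext j
  by_cases h : 1 ≤ j ∧ j ≤ n - 1
  · simp only [coords, dif_pos h, Nat.sub_add_cancel h.1]
  · simp [coords, h]

theorem differentiable_eval_coords (p : MvPolynomial ℕ ℝ) :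
    Differentiable ℝ fun x : Fin (n - 1) → ℝ => eval (coords n x) p := by
  have hcoords (i : ℕ) : Differentiable ℝ fun x : Fin (n - 1) → ℝ => coords n x i := by
    unfold coords
    split_ifs
    exacts [differentiable_apply _, differentiable_const 0]
  induction p using MvPolynomial.induction_on with
  | C a => simp
  | add p q hp hq => simp only [map_add]; exact hp.add hq
  | mul_X p i hp => simp only [map_mul, eval_X]; exact hp.mul (hcoords i)

theorem sum_mul_apply_unitv (L : (Fin (n - 1) → ℝ) →L[ℝ] ℝ) (c : ℕ → ℝ) :
    ∑ j ∈ Finset.Icc 1 (n - 1), c j * L (unitv n j) =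
      L fun i : Fin (n - 1) => c (i + 1 : ℕ) := by
  have hsum : ∑ j ∈ Finset.Icc 1 (n - 1), c j • unitv n j =
      fun i : Fin (n - 1) => c (i + 1 : ℕ) := by
    funext i
    rw [Finset.sum_apply, Finset.sum_eq_single_of_mem (i.val + 1) (by simp)]
    · simp [unitv]
    · intro j _ hne
      simp [unitv, Ne.symm hne]
  simp only [← hsum, map_sum, map_smul, smul_eq_mul]

end coords

section chiS

variable {n : ℕ} {x : Fin (n - 1) → ℝ}

theorem differentiableAt_chiS (k : ℕ) (hx : 0 < eval (coords n x) (xi ℝ 1)) :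
    DifferentiableAt ℝ (chiS n k) x :=
  ((differentiable_eval_coords _).differentiableAt).mul
    ((differentiable_eval_coords _).differentiableAt.rpow_const (Or.inl hx.ne'))

theorem chiS_weight_smul (k a b : ℕ) (hx : 0 < eval (coords n x) (xi ℝ 1)) {l : ℝ}
    (hl : 0 < l) :
    chiS n k (fun i => l ^ (a + b * (i + 1 : ℕ)) * x i) = chiS n k x := by
  have h1 := IsWeightedHomogeneous.eval_pow_mul (isWeightedHomogeneous_xi_succ ℝ a b 0) l
    (coords n x)
  have hk := IsWeightedHomogeneous.eval_pow_mul (isWeightedHomogeneous_xi_succ ℝ a b k) l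
    (coords n x)
  simp only [zero_add] at h1
  set N := (k + 2) * (a + 2 * b)
  have hscale : (l ^ (2 * (a + 2 * b)) : ℝ) ^ (-(((k + 2 : ℕ) : ℝ) / 2)) = (l ^ N)⁻¹ := by
    rw [← Real.rpow_natCast, ← Real.rpow_mul hl.le, ← Real.rpow_natCast, ← Real.rpow_neg hl.le]
    push_cast [N]
    ring_nf
  rw [chiS, chiS, coords_weight_smul (fun j => a + b * j), h1, hk,
    Real.mul_rpow (by positivity) hx.le, hscale]
  field_simp

theorem fderiv_chiS_weight (k a b : ℕ) (hx : 0 < eval (coords n x) (xi ℝ 1)) :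
    fderiv ℝ (chiS n k) x (fun i => ((a + b * (i + 1 : ℕ) : ℕ) : ℝ) * x i) = 0 := by
  refine fderiv_apply_eq_zero_of_comp_eventuallyEq
    (c := fun l (i : Fin (n - 1)) => l ^ (a + b * (i + 1 : ℕ)) * x i)
    (t := 1) (by simp) (differentiableAt_chiS k hx) ?_ ?_
  · refine hasDerivAt_pi.2 fun i => ?_
    simpa using (hasDerivAt_pow (a + b * (i + 1 : ℕ)) (1 : ℝ)).mul_const (x i)
  · filter_upwards [eventually_gt_nhds one_pos] with l hl
    exact chiS_weight_smul k a b hx hl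

end chiS

theorem chiS_invariant_general (n : ℕ) (k : ℕ)
    (x : Fin (n - 1) → ℝ) (hx : 0 < MvPolynomial.eval (coords n x) (xi ℝ 1)) :
    DifferentiableAt ℝ (chiS n k) x ∧
    (∑ j ∈ Finset.Icc 1 (n - 1),
        ((n - 1 - j : ℕ) : ℝ) * coords n x j * fderiv ℝ (chiS n k) x (unitv n j) = 0) ∧
    (∑ j ∈ Finset.Icc 1 (n - 1),
        coords n x j * fderiv ℝ (chiS n k) x (unitv n j) = 0) := by
  set L := fderiv ℝ (chiS n k) x
  have euler : ∑ j ∈ Finset.Icc 1 (n - 1), coords n x j * L (unitv n j) = 0 := by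
    rw [sum_mul_apply_unitv]
    simpa [coords_succ] using fderiv_chiS_weight k 1 0 hx
  have weighted : ∑ j ∈ Finset.Icc 1 (n - 1), (j * coords n x j) * L (unitv n j) = 0 := by
    rw [sum_mul_apply_unitv]
    simpa [coords_succ] using fderiv_chiS_weight k 0 1 hx
  refine ⟨differentiableAt_chiS k hx, ?_, euler⟩
  calc ∑ j ∈ Finset.Icc 1 (n - 1), ((n - 1 - j : ℕ) : ℝ) * coords n x j * L (unitv n j)
      = ((n - 1 : ℕ) : ℝ) * ∑ j ∈ Finset.Icc 1 (n - 1), coords n x j * L (unitv n j) -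
          ∑ j ∈ Finset.Icc 1 (n - 1), (j * coords n x j) * L (unitv n j) := by
        rw [Finset.mul_sum, ← Finset.sum_sub_distrib]
        refine Finset.sum_congr rfl fun j hj => ?_
        rw [Nat.cast_sub (Finset.mem_Icc.mp hj).2]
        ring
    _ = 0 := by rw [euler, weighted, mul_zero, sub_zero]

/-- For `n ≥ 5` and `1 ≤ k ≤ n-4`, the function
`χ_k = ξ_{k+1} · ξ_1^{-(k+2)/2}` satisfies both
`Σ_{j=1}^{n-1} (n-1-j) x_j ∂χ_k/∂x_j = 0` and `Σ_{j=1}^{n-1} x_j ∂χ_k/∂x_j = 0`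
on the open set `{x : ξ_1(x) > 0}`: these are the `n-4` generalized Casimir
invariants of the solvable Lie algebra `s_{n+2}`. -/
theorem chiS_invariant (n : ℕ) (hn : 5 ≤ n)
    (k : ℕ) (hk1 : 1 ≤ k) (hk2 : k ≤ n - 4)
    (x : Fin (n - 1) → ℝ) (hx : 0 < MvPolynomial.eval (coords n x) (xi ℝ 1)) :
    DifferentiableAt ℝ (chiS n k) x ∧
    (∑ j ∈ Finset.Icc 1 (n - 1),
        ((n - 1 - j : ℕ) : ℝ) * coords n x j * fderiv ℝ (chiS n k) x (unitv n j) = 0) ∧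
    (∑ j ∈ Finset.Icc 1 (n - 1),
        coords n x j * fderiv ℝ (chiS n k) x (unitv n j) = 0) :=
  chiS_invariant_general n k x hx
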